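/- Let k be a nonnegative integer and let z be a real number with 0 < z < 4. Then S_k(z) = \sum_{n=1}^{k+1} \sum_{m=1}^{n} (-1)^{m+n} \binom{n}{m} m^{k+1} \int_0^1 \frac{1}{t} \frac{(z t (1-t))^n}{(1 - z t (1-t))^{n+1}} \, dt. -/

import Mathlib

/-
Euler's Beta integral gives `1 / (n C(2n,n)) = ∫₀¹ t^(n-1) (1-t)^n dt`, so with `x = z t (1-t)`,
which lies in `[0, 1)` for `0 < z < 4`, the series is `∫₀¹ (1/t) ∑ₙ n^(k+1) x^n dt`; all terms
are nonnegative, which justifies the interchange. Newton's forward-difference formula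
`N^K = ∑ⱼ C(N,j) Δʲ[r ↦ r^K](0)` and `∑_N C(N,j) x^N = x^j / (1-x)^(j+1)` then evaluate the inner
series as `∑_{j=1}^K Δʲ[r ↦ r^K](0) x^j / (1-x)^(j+1)`, and `Δʲ[r ↦ r^K](0)` is the alternating
binomial sum of the statement.
-/

open scoped BigOperators

/-- `S k z = ∑_{n=1}^∞ n^k z^n / C(2n,n)`. -/
noncomputable def aperySeries (k : ℕ) (z : ℝ) : ℝ :=
  ∑' n : ℕ, ((n : ℝ) + 1) ^ k * z ^ (n + 1) / (Nat.choose (2 * (n + 1)) (n + 1))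

/-- Stirling numbers of the second kind:
`S(k,j) = (-1)^j / j! * ∑_{m=0}^j (-1)^m m^k C(j,m)`. -/
noncomputable def stirling2 (k j : ℕ) : ℝ :=
  (-1 : ℝ) ^ j / (Nat.factorial j) *
    ∑ m ∈ Finset.range (j + 1), (-1 : ℝ) ^ m * (m : ℝ) ^ k * (Nat.choose j m)

/-- Pochhammer (ascending factorial): `(a)_n = a (a+1) ⋯ (a+n-1)`. -/
noncomputable def poch (a : ℝ) (n : ℕ) : ℝ :=
  ∏ i ∈ Finset.range n, (a + i)

open Finset MeasureTheory
open scoped fwdDiff Nat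

section ForwardDifferences

variable {R : Type*} [CommRing R]

theorem fwdDiff_iter_pow_zero_eq_sum_Icc {K : ℕ} (hK : K ≠ 0) (n : ℕ) :
    (Δ_[1])^[n] (fun r : R ↦ r ^ K) 0 =
      ∑ m ∈ Icc 1 n, (-1 : R) ^ (m + n) * n.choose m * (m : R) ^ K := by
  rw [fwdDiff_iter_eq_sum_shift, range_eq_Ico, sum_eq_sum_Ico_succ_bot n.succ_pos]
  simp only [zero_add, Nat.succ_eq_add_one, Ico_add_one_right_eq_Icc, zero_smul, zero_pow hK,
    smul_zero, nsmul_one]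
  refine sum_congr rfl fun m hm ↦ ?_
  obtain ⟨j, rfl⟩ := Nat.exists_eq_add_of_le (mem_Icc.mp hm).2
  rw [zsmul_eq_mul, Nat.add_sub_cancel_left, (by ring : m + (m + j) = j + 2 * m), pow_add,
    pow_mul, neg_one_sq, one_pow]
  push_cast
  ring

theorem natCast_pow_eq_sum_choose_mul_fwdDiff_iter (K N : ℕ) :
    (N : R) ^ K = ∑ n ∈ range (K + 1), N.choose n * (Δ_[1])^[n] (fun r : R ↦ r ^ K) 0 := by
  have newton := shift_eq_sum_fwdDiff_iter (1 : R) (fun r ↦ r ^ K) N 0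
  simp only [zero_add, nsmul_eq_mul, mul_one] at newton
  rw [newton]
  have hN : range (N + 1) ⊆ range (max N K + 1) := range_subset_range.2 (by omega)
  have hK : range (K + 1) ⊆ range (max N K + 1) := range_subset_range.2 (by omega)
  rw [sum_subset hN fun n _ hn ↦ ?_, ← sum_subset hK fun n _ hn ↦ ?_]
  · rw [fwdDiff_iter_pow_eq_zero_of_lt (by simpa using hn), Pi.zero_apply, mul_zero]
  · rw [Nat.choose_eq_zero_of_lt (by simpa using hn), Nat.cast_zero, zero_mul]

end ForwardDifferences

section GeneratingFunctions

variable {𝕜 : Type*} [NormedField 𝕜] {x : 𝕜}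

theorem hasSum_choose_mul_pow (hx : ‖x‖ < 1) (n : ℕ) :
    HasSum (fun N : ℕ ↦ N.choose n * x ^ N) (x ^ n / (1 - x) ^ (n + 1)) := by
  have h := (hasSum_choose_mul_geometric_of_norm_lt_one n hx).mul_left (x ^ n)
  rw [mul_one_div] at h
  refine (hasSum_nat_add_iff' n).mp ?_
  rw [sum_eq_zero fun N hN ↦ by rw [Nat.choose_eq_zero_of_lt (mem_range.mp hN)]; simp, sub_zero]
  exact h.congr_fun fun j ↦ by rw [pow_add]; ring

theorem hasSum_natCast_pow_mul_pow (hx : ‖x‖ < 1) (K : ℕ) :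
    HasSum (fun N : ℕ ↦ (N : 𝕜) ^ K * x ^ N)
      (∑ n ∈ range (K + 1), (Δ_[1])^[n] (fun r : 𝕜 ↦ r ^ K) 0 * (x ^ n / (1 - x) ^ (n + 1))) := by
  refine (hasSum_sum fun n _ ↦ (hasSum_choose_mul_pow hx n).mul_left
    ((Δ_[1])^[n] (fun r : 𝕜 ↦ r ^ K) 0)).congr_fun fun N ↦ ?_
  rw [natCast_pow_eq_sum_choose_mul_fwdDiff_iter, sum_mul]
  exact sum_congr rfl fun n _ ↦ by ring

theorem hasSum_natCast_pow_mul_pow_eq_sum_Icc (hx : ‖x‖ < 1) {K : ℕ} (hK : K ≠ 0) :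
    HasSum (fun N : ℕ ↦ (N : 𝕜) ^ K * x ^ N)
      (∑ n ∈ Icc 1 K, (∑ m ∈ Icc 1 n, (-1 : 𝕜) ^ (m + n) * n.choose m * (m : 𝕜) ^ K) *
        (x ^ n / (1 - x) ^ (n + 1))) := by
  convert hasSum_natCast_pow_mul_pow hx K using 1
  rw [range_eq_Ico, sum_eq_sum_Ico_succ_bot K.succ_pos, Function.iterate_zero_apply, zero_pow hK,
    zero_mul, zero_add]
  simp only [Nat.succ_eq_add_one, zero_add, Ico_add_one_right_eq_Icc,
    fwdDiff_iter_pow_zero_eq_sum_Icc hK]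

end GeneratingFunctions

theorem summable_pow_mul_pow_div_centralBinom {z : ℝ} (hz : |z| < 4) (k : ℕ) :
    Summable fun N : ℕ ↦ (N : ℝ) ^ k * z ^ N / N.centralBinom := by
  have hr : ‖|z| / 4‖ < 1 := by rw [Real.norm_of_nonneg (by positivity)]; linarith
  refine Summable.of_norm_bounded
    (((summable_pow_mul_geometric_of_norm_lt_one (k + 1) hr).mul_left 2).add
      (summable_pow_mul_geometric_of_norm_lt_one k hr)) fun N ↦ ?_
  have hC : (4 : ℝ) ^ N ≤ (2 * N + 1) * N.centralBinom := by
    exact_mod_cast Nat.four_pow_le_two_mul_add_one_mul_central_binom N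
  have hC0 : (0 : ℝ) < N.centralBinom := by exact_mod_cast N.centralBinom_pos
  rw [norm_div, norm_mul, norm_pow, norm_pow, Real.norm_natCast, Real.norm_natCast,
    Real.norm_eq_abs, div_le_iff₀ hC0, div_pow]
  calc (N : ℝ) ^ k * |z| ^ N
      = (N : ℝ) ^ k * (|z| ^ N / 4 ^ N) * 4 ^ N := by field_simp
    _ ≤ (N : ℝ) ^ k * (|z| ^ N / 4 ^ N) * ((2 * N + 1) * N.centralBinom) := by gcongr
    _ = _ := by ring

theorem integral_pow_mul_one_sub_pow (a b : ℕ) :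
    ∫ t in (0 : ℝ)..1, t ^ a * (1 - t) ^ b = a ! * b ! / (a + b + 1)! := by
  have hB := Complex.betaIntegral_eq_Gamma_mul_div (a + 1) (b + 1)
    (by simp; positivity) (by simp; positivity)
  rw [show (a + 1 + (b + 1) : ℂ) = ((a + b + 1 : ℕ) : ℂ) + 1 by push_cast; ring,
    Complex.Gamma_nat_eq_factorial, Complex.Gamma_nat_eq_factorial,
    Complex.Gamma_nat_eq_factorial, Complex.betaIntegral] at hB
  simp only [add_sub_cancel_right, Complex.cpow_natCast] at hB
  apply Complex.ofReal_injective
  rw [← intervalIntegral.integral_ofReal]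
  push_cast
  exact hB

theorem integral_pow_mul_one_sub_pow_succ_self (n : ℕ) :
    ∫ t in (0 : ℝ)..1, t ^ n * (1 - t) ^ (n + 1) = ((n + 1) * (n + 1).centralBinom : ℝ)⁻¹ := by
  have h := Nat.add_choose_mul_factorial_mul_factorial (n + 1) (n + 1)
  rw [← two_mul, ← Nat.centralBinom_eq_two_mul_choose] at h
  rw [integral_pow_mul_one_sub_pow, show n + (n + 1) + 1 = 2 * (n + 1) by ring, ← h]
  push_cast [Nat.factorial_succ]
  field_simp

theorem integral_eq_of_hasSum_integral_of_nonneg {α ι : Type*} [MeasurableSpace α]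
    {μ : Measure α} [Countable ι] {F : ι → α → ℝ} {G : α → ℝ} {a : ℝ}
    (hF : ∀ i, Integrable (F i) μ) (hF0 : ∀ i, 0 ≤ᵐ[μ] F i)
    (hFG : ∀ᵐ t ∂μ, HasSum (fun i ↦ F i t) (G t)) (ha : HasSum (fun i ↦ ∫ t, F i t ∂μ) a) :
    ∫ t, G t ∂μ = a := by
  have hnorm : ∀ i, ∫ t, ‖F i t‖ ∂μ = ∫ t, F i t ∂μ := fun i ↦
    integral_congr_ae ((hF0 i).mono fun t ht ↦ Real.norm_of_nonneg ht)
  have h := hasSum_integral_of_summable_integral_norm hF (by simpa only [hnorm] using ha.summable)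
  rw [integral_congr_ae (hFG.mono fun t ht ↦ ht.tsum_eq.symm)]
  exact h.unique ha

theorem mul_mul_one_sub_lt_one {z : ℝ} (hz0 : 0 ≤ z) (hz4 : z < 4) (t : ℝ) :
    z * t * (1 - t) < 1 := by
  nlinarith [sq_nonneg (2 * t - 1), mul_nonneg hz0 (sq_nonneg (2 * t - 1))]

theorem intervalIntegrable_one_div_mul_pow_div_one_sub_pow {z : ℝ} (hz0 : 0 ≤ z) (hz4 : z < 4)
    {n : ℕ} (hn : 0 < n) :
    IntervalIntegrable (fun t ↦ 1 / t * ((z * t * (1 - t)) ^ n / (1 - z * t * (1 - t)) ^ (n + 1)))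
      volume 0 1 := by
  obtain ⟨j, rfl⟩ := Nat.exists_eq_add_one.mpr hn
  have hcont : Continuous fun t ↦ z * (1 - t) * (z * t * (1 - t)) ^ j /
      (1 - z * t * (1 - t)) ^ (j + 2) :=
    Continuous.div (by fun_prop) (by fun_prop) fun t ↦
      (pow_pos (sub_pos.2 (mul_mul_one_sub_lt_one hz0 hz4 t)) _).ne'
  refine (hcont.intervalIntegrable 0 1).congr fun t ht ↦ ?_
  rw [Set.uIoc_of_le zero_le_one] at ht
  have : t ≠ 0 := ht.1.ne'
  field_simp
  ring

theorem hasSum_pow_mul_beta_integrand {z t : ℝ} (hz0 : 0 ≤ z) (hz4 : z < 4)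
    (ht : t ∈ Set.Ioc (0 : ℝ) 1) {K : ℕ} (hK : K ≠ 0) :
    HasSum (fun n : ℕ ↦ ((n : ℝ) + 1) ^ K * z ^ (n + 1) * (t ^ n * (1 - t) ^ (n + 1)))
      (∑ n ∈ Icc 1 K, (∑ m ∈ Icc 1 n, (-1 : ℝ) ^ (m + n) * n.choose m * (m : ℝ) ^ K) *
        (1 / t * ((z * t * (1 - t)) ^ n / (1 - z * t * (1 - t)) ^ (n + 1)))) := by
  obtain ⟨ht0, ht1⟩ := ht
  have hx0 : 0 ≤ z * t * (1 - t) := mul_nonneg (by positivity) (by linarith)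
  have hx : ‖z * t * (1 - t)‖ < 1 := by
    rw [Real.norm_of_nonneg hx0]; exact mul_mul_one_sub_lt_one hz0 hz4 t
  have h := ((hasSum_nat_add_iff' 1).mpr (hasSum_natCast_pow_mul_pow_eq_sum_Icc hx hK)).mul_left
    (1 / t)
  simp only [range_one, sum_singleton, Nat.cast_zero, zero_pow hK, zero_mul, sub_zero, mul_sum] at h
  rw [sum_congr rfl fun n _ ↦ mul_left_comm _ (1 / t) _]
  refine h.congr_fun fun n ↦ ?_
  rw [mul_pow, mul_pow, pow_succ t]
  push_cast
  field_simp

theorem apery_series_eq_double_sum_integral (k : ℕ) (z : ℝ) (hz0 : 0 < z) (hz4 : z < 4) :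
    aperySeries k z =
      ∑ n ∈ Finset.Icc 1 (k + 1), ∑ m ∈ Finset.Icc 1 n,
        (-1 : ℝ) ^ (m + n) * (Nat.choose n m) * (m : ℝ) ^ (k + 1) *
          ∫ t in (0:ℝ)..1,
            (1 / t) * ((z * t * (1 - t)) ^ n / (1 - z * t * (1 - t)) ^ (n + 1)) := by
  set F : ℕ → ℝ → ℝ := fun n t ↦
    ((n : ℝ) + 1) ^ (k + 1) * z ^ (n + 1) * (t ^ n * (1 - t) ^ (n + 1))
  have hterm (n : ℕ) : ((n : ℝ) + 1) ^ k * z ^ (n + 1) / (2 * (n + 1)).choose (n + 1) =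
      ∫ t in Set.Ioc 0 1, F n t := by
    rw [integral_const_mul, ← intervalIntegral.integral_of_le zero_le_one,
      integral_pow_mul_one_sub_pow_succ_self, Nat.centralBinom_eq_two_mul_choose]
    field_simp
    ring
  have hsum : HasSum (fun n ↦ ∫ t in Set.Ioc 0 1, F n t) (aperySeries k z) := by
    simp_rw [← hterm]
    refine Summable.hasSum ?_
    simpa [Nat.centralBinom_eq_two_mul_choose] using (summable_nat_add_iff 1).mpr
      (summable_pow_mul_pow_div_centralBinom (abs_lt.2 ⟨by linarith, hz4⟩) k)
  have hF0 (n : ℕ) : 0 ≤ᵐ[volume.restrict (Set.Ioc 0 1)] F n :=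
    ae_restrict_of_forall_mem measurableSet_Ioc fun t ⟨ht0, ht1⟩ ↦ mul_nonneg (by positivity)
      (mul_nonneg (pow_nonneg ht0.le _) (pow_nonneg (sub_nonneg.2 ht1) _))
  have hFG := ae_restrict_of_forall_mem (μ := volume) measurableSet_Ioc fun t ht ↦
    hasSum_pow_mul_beta_integrand hz0.le hz4 ht k.succ_ne_zero
  rw [← integral_eq_of_hasSum_integral_of_nonneg
      (fun n ↦ (by fun_prop : Continuous (F n)).integrableOn_Ioc) hF0 hFG hsum,
    ← intervalIntegral.integral_of_le zero_le_one, intervalIntegral.integral_finsetSum fun n hn ↦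
      (intervalIntegrable_one_div_mul_pow_div_one_sub_pow hz0.le hz4 (mem_Icc.1 hn).1).const_mul _]
  refine sum_congr rfl fun n _ ↦ ?_
  rw [intervalIntegral.integral_const_mul, sum_mul]
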